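/- Let μ be a real number and n, s integers with n ≥ s ≥ 1 and n > 1. Then E_{s,0}^μ(n) = D_{s−1,0}^{μ+3}(n−1) and D_{s,0}^μ(n) = E_{s−1,0}^{μ+3}(n−1). -/

import Mathlib

open Finset

/-- The determinant `E_{s,t}^μ(n)` with entries `C(μ+i+j+s+t-4, j+t-1) - δ_{i+s,j+t}`
(1-based indices `i,j`), where `C` is the generalized binomial coefficient. -/
noncomputable def detE (μ : ℝ) (s : ℤ) (t : ℕ) (n : ℕ) : ℝ :=
  Matrix.det (Matrix.of fun i j : Fin n =>
    Ring.choose (μ + (i.1 + 1 : ℕ) + (j.1 + 1 : ℕ) + s + t - 4) (j.1 + t) -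
      if (i.1 + 1 : ℤ) + s = (j.1 + 1 : ℤ) + t then 1 else 0)

/-- The determinant `D_{s,t}^μ(n)` with entries `C(μ+i+j+s+t-4, j+t-1) + δ_{i+s,j+t}`. -/
noncomputable def detD (μ : ℝ) (s : ℤ) (t : ℕ) (n : ℕ) : ℝ :=
  Matrix.det (Matrix.of fun i j : Fin n =>
    Ring.choose (μ + (i.1 + 1 : ℕ) + (j.1 + 1 : ℕ) + s + t - 4) (j.1 + t) +
      if (i.1 + 1 : ℤ) + s = (j.1 + 1 : ℤ) + t then 1 else 0)

/-- The rising factorial (Pochhammer symbol) `(a)_b = a(a+1)⋯(a+b-1)`. -/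
noncomputable def poch (a : ℝ) (b : ℕ) : ℝ := (ascPochhammer ℝ b).eval a
/-! Subtracting each row from the next one keeps the determinant, and since `s ≥ 1` the first
column of `C(a + i + j, j) + ε δ_{i+s,j}` consists of ones, so expanding along it drops the size by
one. Replacing then every column by the sum of all columns up to it is again unimodular, and
Pascal's rule, applied once in each step, turns the entries into `C(a + 2 + i + j, j) - ε δ_{i+s-1,j}`.
Thus one step shifts `a` by `2`, lowers `s` by one and flips the sign of `ε`, exchanging `E` and `D`. -/

namespace Matrix

variable {R : Type*} [CommRing R]

theorem det_eq_det_succ_sub_castSucc_of_col_zero_eq_one {m : ℕ}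
    (M : Matrix (Fin (m + 1)) (Fin (m + 1)) R) (hM : ∀ i, M i 0 = 1) :
    M.det = (of fun i j : Fin m => M i.succ j.succ - M i.castSucc j.succ).det := by
  let N : Matrix (Fin (m + 1)) (Fin (m + 1)) R :=
    Fin.cons (M 0) fun i => M i.succ - M i.castSucc
  have hN : M.det = N.det :=
    det_eq_of_forall_row_eq_smul_add_pred (fun _ => 1) (fun _ => rfl) fun i j => by simp [N]
  rw [hN, det_succ_column_zero, Fin.sum_univ_succ]
  simp only [Fin.coe_ofNat_eq_mod, Nat.zero_mod, pow_zero, Fin.cons_zero, hM, mul_one,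
    Fin.succAbove_zero, one_mul, Fin.val_succ, Fin.cons_succ, Pi.sub_apply, sub_self, mul_zero,
    zero_mul, sum_const_zero, add_zero, N]
  rfl

end Matrix

open Matrix

section PascalDelta

variable {R : Type*} [CommRing R] [BinomialRing R]

def pascalDelta (n s : ℕ) (a ε : R) : Matrix (Fin n) (Fin n) R :=
  of fun i j => Ring.choose (a + i + j) j + ε * if i.1 + s = j then 1 else 0

theorem det_pascalDelta_succ (m s : ℕ) (a ε : R) :
    (pascalDelta (m + 1) (s + 1) a ε).det = (pascalDelta m s (a + 2) (-ε)).det := by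
  rw [det_eq_det_succ_sub_castSucc_of_col_zero_eq_one _ fun i => by simp [pascalDelta]]
  rcases m with _ | m
  · simp
  symm
  refine det_eq_of_forall_col_eq_smul_add_pred (fun _ => 1) (fun i => ?first_col) fun i j => ?succ_col
  case first_col =>
    simp only [pascalDelta, mul_ite, mul_one, mul_zero, of_apply, Fin.coe_ofNat_eq_mod,
      Nat.zero_mod, Nat.cast_zero, add_zero, Ring.choose_zero_right', pow_zero,
      Nat.add_eq_zero_iff, Fin.val_eq_zero_iff, Fin.val_succ, Nat.cast_add, Nat.cast_one,
      Fin.val_castSucc, zero_add, Ring.choose_one_right', pow_one]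
    split_ifs with h0 <;> simp only [Fin.ext_iff, Fin.val_zero] at h0 <;> first | omega | ring
  case succ_col =>
    simp only [pascalDelta, mul_ite, mul_one, mul_zero, of_apply, Fin.val_succ, Nat.cast_add,
      Nat.cast_one, Fin.val_castSucc, one_mul]
    rw [show a + (((i : ℕ) : R) + 1) + (((j : ℕ) : R) + 1 + 1) = a + 2 + i + j + 1 by ring,
      show a + ((i : ℕ) : R) + (((j : ℕ) : R) + 1 + 1) = a + 2 + i + j by ring,
      show a + 2 + ((i : ℕ) : R) + (((j : ℕ) : R) + 1) = a + 2 + i + j + 1 by ring,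
      Ring.choose_succ_succ, Ring.choose_succ_succ]
    split_ifs <;> first | omega | ring

end PascalDelta

theorem detE_eq_det_pascalDelta (μ : ℝ) {s : ℤ} {t : ℕ} (hs : s = t) (n : ℕ) :
    detE μ s 0 n = (pascalDelta n t (μ - 2 + t) (-1)).det := by
  subst hs
  unfold detE pascalDelta
  congr 1
  ext i j
  simp only [of_apply]
  split_ifs <;> push_cast at * <;> first | omega | ring_nf

theorem detD_eq_det_pascalDelta (μ : ℝ) {s : ℤ} {t : ℕ} (hs : s = t) (n : ℕ) :
    detD μ s 0 n = (pascalDelta n t (μ - 2 + t) 1).det := by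
  subst hs
  unfold detD pascalDelta
  congr 1
  ext i j
  simp only [of_apply]
  split_ifs <;> push_cast at * <;> first | omega | ring_nf

theorem famA_general (μ : ℝ) (n s : ℕ) (hs : 1 ≤ s) :
    detE μ s 0 n = detD (μ + 3) ((s : ℤ) - 1) 0 (n - 1) ∧
    detD μ s 0 n = detE (μ + 3) ((s : ℤ) - 1) 0 (n - 1) := by
  obtain ⟨t, rfl⟩ := Nat.exists_eq_add_of_le' hs
  have hst : ((t + 1 : ℕ) : ℤ) - 1 = t := by push_cast; ring
  have ha : μ - 2 + (t + 1 : ℕ) + 2 = μ + 3 - 2 + t := by push_cast; ring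
  rcases n with _ | m
  · simp [detE, detD]
  · rw [detE_eq_det_pascalDelta μ rfl, detD_eq_det_pascalDelta μ rfl,
      detE_eq_det_pascalDelta (μ + 3) hst, detD_eq_det_pascalDelta (μ + 3) hst,
      Nat.add_sub_cancel, det_pascalDelta_succ, det_pascalDelta_succ, neg_neg, ha]
    exact ⟨rfl, rfl⟩

/-- Lemma (famA): `E_{s,0}^μ(n) = D_{s-1,0}^{μ+3}(n-1)` and `D_{s,0}^μ(n) = E_{s-1,0}^{μ+3}(n-1)`. -/
theorem famA (μ : ℝ) (n s : ℕ) (hs : 1 ≤ s) (hsn : s ≤ n) (hn : 1 < n) :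
    detE μ s 0 n = detD (μ + 3) ((s : ℤ) - 1) 0 (n - 1) ∧
    detD μ s 0 n = detE (μ + 3) ((s : ℤ) - 1) 0 (n - 1) :=
  famA_general μ n s hs
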